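/- Let F be a random variable, z > 0, and suppose E[F^{2k}] ≤ C. Let f_z be the Stein equation solution. Then E[(f_z'(F))²] ≤ C'/z^{2k} for a constant C' depending only on k and C. -/

import Mathlib

/-!
For `w ≤ z` the Stein equation gives `f_z'(w) = (1 - Φ z) (w Φ(w) / φ(w) + 1)`, and for
`w > z`, `f_z'(w) = Φ z (w (1 - Φ w) / φ(w) - 1)`. Integrating `t φ(t) = -φ'(t)` over
half-lines gives the Mills-ratio bounds `w (1 - Φ w) ≤ φ w` and `-φ w ≤ w Φ w` for every
real `w`. They show `|f_z'| ≤ 2` when `z ≥ 0`, and `f_z'(w) ≤ φ(z)/z + e^{-3z²/8}/2` when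
`w ≤ z/2`, which is `O(z^{-k})` because `x^m e^{-a x} ≤ m!/a^m`. Where `w > z/2` the bound
`f_z'(w)² ≤ 4` is paid for by `z^{2k} ≤ 4^k w^{2k}`. So
`z^{2k} f_z'(w)² ≤ A_k + 4^{k+1} w^{2k}` for all `w` and a constant `A_k`, and taking
expectations finishes the proof.
-/

open MeasureTheory Real

/-- The standard normal cumulative distribution function. -/
noncomputable def stdGaussCDF (z : ℝ) : ℝ :=
  ∫ t in Set.Iic z, Real.exp (-t ^ 2 / 2) / Real.sqrt (2 * Real.pi)

/-- The standard normal density. -/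
noncomputable def stdGaussPDF (w : ℝ) : ℝ :=
  Real.exp (-w ^ 2 / 2) / Real.sqrt (2 * Real.pi)

/-- The solution of the Stein equation for the Kolmogorov test function `1_{· ≤ z}`. -/
noncomputable def steinSol (z w : ℝ) : ℝ :=
  if w ≤ z then stdGaussCDF w * (1 - stdGaussCDF z) / stdGaussPDF w
  else stdGaussCDF z * (1 - stdGaussCDF w) / stdGaussPDF w

/-- The derivative of the Stein solution, defined via the Stein equation
`f_z'(w) = w f_z(w) + 1_{w ≤ z} - Φ(z)`. -/
noncomputable def steinSol' (z w : ℝ) : ℝ :=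
  w * steinSol z w + (if w ≤ z then 1 else 0) - stdGaussCDF z

open Set Filter Topology ProbabilityTheory

local notation "φ" => stdGaussPDF
local notation "Φ" => stdGaussCDF

lemma stdGaussPDF_eq_gaussianPDFReal : φ = gaussianPDFReal 0 1 := by
  ext w
  simp [stdGaussPDF, gaussianPDFReal, div_eq_inv_mul]

lemma stdGaussPDF_pos (w : ℝ) : 0 < φ w := by
  rw [stdGaussPDF_eq_gaussianPDFReal]
  exact gaussianPDFReal_pos _ _ _ one_ne_zero

lemma integrable_stdGaussPDF : Integrable φ := by
  rw [stdGaussPDF_eq_gaussianPDFReal]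
  exact integrable_gaussianPDFReal _ _

lemma integral_stdGaussPDF : ∫ w, φ w = 1 := by
  rw [stdGaussPDF_eq_gaussianPDFReal]
  exact integral_gaussianPDFReal_eq_one _ one_ne_zero

lemma stdGaussCDF_eq (z : ℝ) : Φ z = ∫ t in Iic z, φ t := rfl

lemma one_sub_stdGaussCDF_eq (z : ℝ) : 1 - Φ z = ∫ t in Ioi z, φ t := by
  rw [← integral_stdGaussPDF, stdGaussCDF_eq, ← intervalIntegral.integral_Iic_add_Ioi
    integrable_stdGaussPDF.integrableOn integrable_stdGaussPDF.integrableOn, add_sub_cancel_left]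

lemma stdGaussCDF_nonneg (z : ℝ) : 0 ≤ Φ z :=
  setIntegral_nonneg measurableSet_Iic fun t _ => (stdGaussPDF_pos t).le

lemma one_sub_stdGaussCDF_nonneg (z : ℝ) : 0 ≤ 1 - Φ z := by
  rw [one_sub_stdGaussCDF_eq]
  exact setIntegral_nonneg measurableSet_Ioi fun t _ => (stdGaussPDF_pos t).le

lemma stdGaussCDF_mono : Monotone Φ := fun _ _ h =>
  setIntegral_mono_set integrable_stdGaussPDF.integrableOn
    (ae_of_all _ fun t => (stdGaussPDF_pos t).le) (Iic_subset_Iic.2 h).eventuallyLE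

lemma stdGaussPDF_eq_exp (w : ℝ) : φ w = (√(2 * π))⁻¹ * exp (-2⁻¹ * w ^ 2) := by
  rw [stdGaussPDF, div_eq_inv_mul]
  ring_nf

lemma hasDerivAt_stdGaussPDF (w : ℝ) : HasDerivAt φ (-(w * φ w)) w := by
  have h := (((hasDerivAt_pow 2 w).const_mul (-2⁻¹ : ℝ)).exp).const_mul (√(2 * π))⁻¹
  rw [show φ = _ from funext stdGaussPDF_eq_exp]
  refine h.congr_deriv ?_
  push_cast
  ring

lemma tendsto_stdGaussPDF_cocompact : Tendsto φ (cocompact ℝ) (𝓝 0) := by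
  have h := (tendsto_rpow_abs_mul_exp_neg_mul_sq_cocompact (by norm_num : (0 : ℝ) < 2⁻¹)
    0).const_mul (√(2 * π))⁻¹
  rw [mul_zero] at h
  convert h using 2 with w
  simp [stdGaussPDF_eq_exp]

lemma integrable_mul_stdGaussPDF : Integrable fun t => t * φ t := by
  simp_rw [stdGaussPDF_eq_exp, mul_left_comm _ (√(2 * π))⁻¹]
  exact (integrable_mul_exp_neg_mul_sq (by norm_num : (0 : ℝ) < 2⁻¹)).const_mul _

lemma integral_Ioi_mul_stdGaussPDF (w : ℝ) : ∫ t in Ioi w, t * φ t = φ w := by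
  have h := integral_Ioi_of_hasDerivAt_of_tendsto' (f := fun t => -φ t)
    (f' := fun t => t * φ t) (a := w) (m := 0)
    (fun t _ => (hasDerivAt_stdGaussPDF t).neg.congr_deriv (neg_neg _))
    integrable_mul_stdGaussPDF.integrableOn
    (by simpa using (tendsto_stdGaussPDF_cocompact.mono_left atTop_le_cocompact).neg)
  simpa using h

lemma integral_Iic_mul_stdGaussPDF (w : ℝ) : ∫ t in Iic w, t * φ t = -φ w := by
  have h := integral_Iic_of_hasDerivAt_of_tendsto' (f := fun t => -φ t)
    (f' := fun t => t * φ t) (a := w) (m := 0)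
    (fun t _ => (hasDerivAt_stdGaussPDF t).neg.congr_deriv (neg_neg _))
    integrable_mul_stdGaussPDF.integrableOn
    (by simpa using (tendsto_stdGaussPDF_cocompact.mono_left atBot_le_cocompact).neg)
  simpa using h

lemma mul_one_sub_stdGaussCDF_le (w : ℝ) : w * (1 - Φ w) ≤ φ w := by
  rw [one_sub_stdGaussCDF_eq, ← integral_Ioi_mul_stdGaussPDF, ← integral_const_mul]
  exact setIntegral_mono_on (integrable_stdGaussPDF.const_mul w).integrableOn
    integrable_mul_stdGaussPDF.integrableOn measurableSet_Ioi fun t ht =>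
      mul_le_mul_of_nonneg_right (le_of_lt ht) (stdGaussPDF_pos t).le

lemma neg_stdGaussPDF_le_mul_stdGaussCDF (w : ℝ) : -φ w ≤ w * Φ w := by
  rw [stdGaussCDF_eq, ← integral_Iic_mul_stdGaussPDF, ← integral_const_mul]
  exact setIntegral_mono_on integrable_mul_stdGaussPDF.integrableOn
    (integrable_stdGaussPDF.const_mul w).integrableOn measurableSet_Iic fun t ht =>
      mul_le_mul_of_nonneg_right ht (stdGaussPDF_pos t).le

lemma steinSol'_eq_of_le {z w : ℝ} (h : w ≤ z) :
    steinSol' z w = (1 - Φ z) * (w * Φ w / φ w + 1) := by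
  have := (stdGaussPDF_pos w).ne'
  rw [steinSol', steinSol, if_pos h, if_pos h]
  field_simp
  ring

lemma steinSol'_eq_of_lt {z w : ℝ} (h : z < w) :
    steinSol' z w = Φ z * (w * (1 - Φ w) / φ w - 1) := by
  have := (stdGaussPDF_pos w).ne'
  rw [steinSol', steinSol, if_neg h.not_ge, if_neg h.not_ge]
  field_simp
  ring

lemma steinSol'_nonneg_of_le {z w : ℝ} (h : w ≤ z) : 0 ≤ steinSol' z w := by
  have hφ := stdGaussPDF_pos w
  have : -1 ≤ w * Φ w / φ w := by
    rw [le_div_iff₀ hφ]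
    linarith [neg_stdGaussPDF_le_mul_stdGaussCDF w]
  rw [steinSol'_eq_of_le h]
  exact mul_nonneg (one_sub_stdGaussCDF_nonneg z) (by linarith)

lemma steinSol'_sq_le_four {z : ℝ} (hz : 0 ≤ z) (w : ℝ) : steinSol' z w ^ 2 ≤ 4 := by
  have hφ := stdGaussPDF_pos w
  have hΦw := stdGaussCDF_nonneg w
  have hΦw₁ : Φ w ≤ 1 := by linarith [one_sub_stdGaussCDF_nonneg w]
  have hΦz₁ : Φ z ≤ 1 := by linarith [one_sub_stdGaussCDF_nonneg z]
  rcases le_or_gt w z with hwz | hzw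
  · have hlow := steinSol'_nonneg_of_le hwz
    have hΦ := stdGaussCDF_mono hwz
    have hratio : (1 - Φ z) * (w * Φ w / φ w) ≤ 1 := by
      rw [← mul_div_assoc, div_le_one hφ]
      rcases le_total w 0 with hw | hw
      · have := mul_nonpos_of_nonneg_of_nonpos (one_sub_stdGaussCDF_nonneg z)
          (mul_nonpos_of_nonpos_of_nonneg hw hΦw)
        linarith
      · calc (1 - Φ z) * (w * Φ w) ≤ (1 - Φ w) * w :=
              mul_le_mul (by linarith) (mul_le_of_le_one_right hw hΦw₁) (by positivity)
                (one_sub_stdGaussCDF_nonneg w)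
          _ ≤ φ w := by linarith [mul_one_sub_stdGaussCDF_le w]
    have hup : steinSol' z w ≤ 2 := by
      rw [steinSol'_eq_of_le hwz]
      linarith [one_sub_stdGaussCDF_nonneg z]
    nlinarith
  · have hw : 0 < w := hz.trans_lt hzw
    have hratio : w * (1 - Φ w) / φ w ≤ 1 := (div_le_one hφ).2 (mul_one_sub_stdGaussCDF_le w)
    have hratio₀ : 0 ≤ w * (1 - Φ w) / φ w :=
      div_nonneg (mul_nonneg hw.le (one_sub_stdGaussCDF_nonneg w)) hφ.le
    calc steinSol' z w ^ 2 = Φ z ^ 2 * (1 - w * (1 - Φ w) / φ w) ^ 2 := by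
          rw [steinSol'_eq_of_lt hzw]; ring
      _ ≤ 1 := mul_le_one₀ (pow_le_one₀ (stdGaussCDF_nonneg z) hΦz₁) (sq_nonneg _)
          (pow_le_one₀ (by linarith) (by linarith))
      _ ≤ 4 := by norm_num

lemma stdGaussPDF_le_of_sq_le {x y : ℝ} (h : x ^ 2 ≤ y ^ 2) : φ y ≤ φ x := by
  unfold stdGaussPDF
  gcongr

lemma stdGaussPDF_sq (z : ℝ) : φ z ^ 2 = exp (-z ^ 2) / (2 * π) := by
  rw [stdGaussPDF, div_pow, sq_sqrt (by positivity), ← exp_nat_mul]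
  ring_nf

lemma stdGaussPDF_eq_half_mul_exp (z : ℝ) : φ z = φ (z / 2) * exp (-(3 * z ^ 2 / 8)) := by
  rw [stdGaussPDF, stdGaussPDF, div_mul_eq_mul_div, ← exp_add]
  ring_nf

lemma pow_mul_exp_neg_mul_le (m : ℕ) {a x : ℝ} (ha : 0 < a) (hx : 0 ≤ x) :
    x ^ m * exp (-(a * x)) ≤ m.factorial / a ^ m := by
  have h := pow_div_factorial_le_exp _ (mul_nonneg ha.le hx) m
  rw [div_le_iff₀ (by positivity), mul_pow] at h
  rw [le_div_iff₀ (by positivity), exp_neg]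
  calc x ^ m * (exp (a * x))⁻¹ * a ^ m = a ^ m * x ^ m * (exp (a * x))⁻¹ := by ring
    _ ≤ exp (a * x) * m.factorial * (exp (a * x))⁻¹ := by gcongr
    _ = m.factorial := by field_simp

lemma steinSol'_le_of_le_half {z w : ℝ} (hz : 0 < z) (hw : w ≤ z / 2) :
    steinSol' z w ≤ φ z / z + exp (-(3 * z ^ 2 / 8)) / 2 := by
  have htail : 1 - Φ z ≤ φ z / z :=
    (le_div_iff₀ hz).2 (by linarith [mul_one_sub_stdGaussCDF_le z])
  have hratio : (1 - Φ z) * (w * Φ w / φ w) ≤ exp (-(3 * z ^ 2 / 8)) / 2 := by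
    rcases le_or_gt w 0 with hw₀ | hw₀
    · have : w * Φ w / φ w ≤ 0 := div_nonpos_of_nonpos_of_nonneg
        (mul_nonpos_of_nonpos_of_nonneg hw₀ (stdGaussCDF_nonneg w)) (stdGaussPDF_pos w).le
      linarith [mul_nonpos_of_nonneg_of_nonpos (one_sub_stdGaussCDF_nonneg z) this,
        exp_pos (-(3 * z ^ 2 / 8))]
    · have hΦw₁ : Φ w ≤ 1 := by linarith [one_sub_stdGaussCDF_nonneg w]
      have : w * Φ w / φ w ≤ (z / 2) / φ (z / 2) :=
        div_le_div₀ (by positivity) (by nlinarith [stdGaussCDF_nonneg w]) (stdGaussPDF_pos _)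
          (stdGaussPDF_le_of_sq_le (by nlinarith))
      calc (1 - Φ z) * (w * Φ w / φ w) ≤ φ z / z * ((z / 2) / φ (z / 2)) :=
            mul_le_mul htail this (div_nonneg (mul_nonneg hw₀.le (stdGaussCDF_nonneg w))
              (stdGaussPDF_pos w).le) (by have := stdGaussPDF_pos z; positivity)
        _ = exp (-(3 * z ^ 2 / 8)) / 2 := by
          have := (stdGaussPDF_pos (z / 2)).ne'
          rw [stdGaussPDF_eq_half_mul_exp z]
          field_simp
  rw [steinSol'_eq_of_le (by linarith), mul_add, mul_one]
  linarith

-- `A_k`: the bound `x^m e^{-a x} ≤ m!/a^m` applied to `z^{2k}` times the squares of the two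
-- terms in `steinSol'_le_of_le_half`.
noncomputable def steinBulkConst (k : ℕ) : ℝ :=
  (k - 1).factorial / π + k.factorial / (3 / 4) ^ k / 2

lemma steinBulkConst_pos (k : ℕ) : 0 < steinBulkConst k := by
  unfold steinBulkConst
  positivity

lemma steinSol'_sq_mul_pow_le_of_le_half {k : ℕ} (hk : 0 < k) {z w : ℝ} (hz : 0 < z)
    (hw : w ≤ z / 2) : steinSol' z w ^ 2 * z ^ (2 * k) ≤ steinBulkConst k := by
  have hf₀ := steinSol'_nonneg_of_le (show w ≤ z by linarith)
  have hf := steinSol'_le_of_le_half hz hw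
  set a := φ z / z
  set b := exp (-(3 * z ^ 2 / 8)) / 2
  have hsq : steinSol' z w ^ 2 ≤ 2 * a ^ 2 + 2 * b ^ 2 := by nlinarith [sq_nonneg (a - b)]
  have hpow : z ^ (2 * k) = z ^ 2 * (z ^ 2) ^ (k - 1) := by
    rw [← pow_succ', ← pow_mul, Nat.sub_add_cancel hk]
  have ha : 2 * a ^ 2 * z ^ (2 * k) = (z ^ 2) ^ (k - 1) * exp (-(1 * z ^ 2)) / π := by
    rw [hpow, div_pow, stdGaussPDF_sq]
    field_simp
  have hb : 2 * b ^ 2 * z ^ (2 * k) = (z ^ 2) ^ k * exp (-(3 / 4 * z ^ 2)) / 2 := by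
    rw [div_pow, ← exp_nat_mul, pow_mul]
    ring_nf
  calc steinSol' z w ^ 2 * z ^ (2 * k) ≤ (2 * a ^ 2 + 2 * b ^ 2) * z ^ (2 * k) := by gcongr
    _ = (z ^ 2) ^ (k - 1) * exp (-(1 * z ^ 2)) / π
        + (z ^ 2) ^ k * exp (-(3 / 4 * z ^ 2)) / 2 := by rw [add_mul, ha, hb]
    _ ≤ steinBulkConst k := by
      unfold steinBulkConst
      gcongr
      · simpa using pow_mul_exp_neg_mul_le (k - 1) one_pos (sq_nonneg z)
      · exact pow_mul_exp_neg_mul_le k (by norm_num) (sq_nonneg z)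

lemma steinSol'_sq_le {k : ℕ} (hk : 0 < k) {z : ℝ} (hz : 0 < z) (w : ℝ) :
    steinSol' z w ^ 2 ≤ (steinBulkConst k + 4 ^ (k + 1) * w ^ (2 * k)) / z ^ (2 * k) := by
  rw [le_div_iff₀ (by positivity)]
  rcases le_or_gt w (z / 2) with hw | hw
  · have : 0 ≤ 4 ^ (k + 1) * w ^ (2 * k) := by
      have := (even_two_mul k).pow_nonneg w
      positivity
    linarith [steinSol'_sq_mul_pow_le_of_le_half hk hz hw]
  · have hzw : z ^ (2 * k) ≤ 4 ^ k * w ^ (2 * k) := by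
      rw [pow_mul, pow_mul, ← mul_pow]
      gcongr
      nlinarith
    calc steinSol' z w ^ 2 * z ^ (2 * k) ≤ 4 * (4 ^ k * w ^ (2 * k)) :=
          mul_le_mul (steinSol'_sq_le_four hz.le w) hzw (by positivity) (by norm_num)
      _ = 4 ^ (k + 1) * w ^ (2 * k) := by ring
      _ ≤ _ := le_add_of_nonneg_left (steinBulkConst_pos k).le

theorem stmt_11_general {Ω : Type*} [MeasureSpace Ω] [IsProbabilityMeasure (volume : Measure Ω)]
    (F : Ω → ℝ) (k : ℕ) (hk : 0 < k) (C : ℝ)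
    (hmom : ∫ ω, F ω ^ (2 * k) ≤ C) (hint : Integrable fun ω => F ω ^ (2 * k)) :
    ∃ C' > (0 : ℝ), ∀ z : ℝ, 0 < z →
      ∫ ω, (steinSol' z (F ω)) ^ 2 ≤ C' / z ^ (2 * k) := by
  have hC : 0 ≤ C := (integral_nonneg fun ω => (even_two_mul k).pow_nonneg (F ω)).trans hmom
  refine ⟨steinBulkConst k + 4 ^ (k + 1) * C,
    add_pos_of_pos_of_nonneg (steinBulkConst_pos k) (by positivity), fun z hz => ?_⟩
  have hbound := ((integrable_const (steinBulkConst k)).add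
    (hint.const_mul (4 ^ (k + 1)))).div_const (z ^ (2 * k))
  calc ∫ ω, steinSol' z (F ω) ^ 2
      ≤ ∫ ω, (steinBulkConst k + 4 ^ (k + 1) * F ω ^ (2 * k)) / z ^ (2 * k) :=
        integral_mono_of_nonneg (ae_of_all _ fun _ => sq_nonneg _) hbound
          (ae_of_all _ fun ω => steinSol'_sq_le hk hz (F ω))
    _ = (steinBulkConst k + 4 ^ (k + 1) * ∫ ω, F ω ^ (2 * k)) / z ^ (2 * k) := by
        rw [integral_div, integral_add (integrable_const _) (hint.const_mul _), integral_const_mul]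
        simp
    _ ≤ (steinBulkConst k + 4 ^ (k + 1) * C) / z ^ (2 * k) := by gcongr

theorem stmt_11 {Ω : Type*} [MeasureSpace Ω] [IsProbabilityMeasure (volume : Measure Ω)]
    (F : Ω → ℝ) (hF : Measurable F) (k : ℕ) (hk : 0 < k) (C : ℝ) (hC : 0 < C)
    (hmom : ∫ ω, F ω ^ (2 * k) ≤ C) (hint : Integrable fun ω => F ω ^ (2 * k)) :
    ∃ C' > (0 : ℝ), ∀ z : ℝ, 0 < z →
      ∫ ω, (steinSol' z (F ω)) ^ 2 ≤ C' / z ^ (2 * k) :=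
  stmt_11_general F k hk C hmom hint
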